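/- arXiv:math/0403282 — 4 statements merged into one kernel-verified Lean document; each statement's English description precedes it below -/
import Mathlib

section
/- Let D ⊆ C be a subcoalgebra and set M_D := {m ∈ M | δ(m) ∈ D ⊗ M}. Then δ(M_D) ⊆ D ⊗ M_D, i.e. for every m ∈ M_D the element δ(m) lies in the image of D ⊗ M_D inside C ⊗ M; in particular the restriction of δ makes M_D a left D-comodule. -/
open TensorProduct

/-- if `D ⊆ C` is a subcoalgebra and `M_D = {m | δ(m) ∈ D ⊗ M}`, then
`δ(M_D) ⊆ D ⊗ M_D` inside `C ⊗ M`. -/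
theorem subcoalgebra_comodule
    {k C M : Type*} [Field k]
    [AddCommGroup C] [Module k C] [Coalgebra k C]
    [AddCommGroup M] [Module k M]
    (δ : M →ₗ[k] C ⊗[k] M)
    (hcoassoc : ∀ m : M,
      (TensorProduct.assoc k C C M)
          ((TensorProduct.map (Coalgebra.comul (R := k)) LinearMap.id) (δ m)) =
        (TensorProduct.map LinearMap.id δ) (δ m))
    (hcounit : ∀ m : M,
      (TensorProduct.lid k M)
          ((TensorProduct.map (Coalgebra.counit (R := k)) LinearMap.id) (δ m)) = m)
    (D : Submodule k C)
    (hD : ∀ d ∈ D, Coalgebra.comul (R := k) d ∈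
      LinearMap.range (TensorProduct.map D.subtype D.subtype)) :
    ∀ m ∈ Submodule.comap δ
        (LinearMap.range (TensorProduct.map D.subtype (LinearMap.id (M := M)))),
      δ m ∈ LinearMap.range (TensorProduct.map D.subtype
        (Submodule.comap δ
          (LinearMap.range (TensorProduct.map D.subtype (LinearMap.id (M := M))))).subtype) := by
  classical
  set ι : D →ₗ[k] C := D.subtype with hι
  set p : C →ₗ[k] C ⧸ D := D.mkQ with hp
  set N : Submodule k M := Submodule.comap δ
    (LinearMap.range (TensorProduct.map D.subtype (LinearMap.id (M := M)))) with hNdef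
  set T : M →ₗ[k] (C ⧸ D) ⊗[k] M := (LinearMap.rTensor M p).comp δ with hT
  -- `map ι id = rTensor M ι`
  have hmapι : TensorProduct.map D.subtype (LinearMap.id (M := M)) = LinearMap.rTensor M ι := rfl
  -- exactness of `D ⊗ M → C ⊗ M → (C/D) ⊗ M`
  have hexact : Function.Exact (LinearMap.rTensor M ι) (LinearMap.rTensor M p) :=
    rTensor_exact M (LinearMap.exact_subtype_mkQ D) (Submodule.mkQ_surjective D)
  -- N = ker T
  have hkerT : LinearMap.ker T = N := by
    ext m
    simp only [hT, LinearMap.mem_ker, LinearMap.coe_comp, Function.comp_apply,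
      hNdef, Submodule.mem_comap, hmapι, LinearMap.mem_range]
    rw [hexact (δ m)]
    exact Iff.rfl
  intro m hm
  rw [hNdef] at hm
  obtain ⟨x, hx⟩ : ∃ x : D ⊗[k] M, LinearMap.rTensor M ι x = δ m := hm
  -- key vanishing: (id_C ⊗ T)(δ m) = 0
  have hinner : ∀ (m' : M) (y : D ⊗[k] D),
      LinearMap.lTensor C (LinearMap.rTensor M p)
        ((TensorProduct.assoc k C C M) ((TensorProduct.map ι ι y) ⊗ₜ[k] m')) = 0 := by
    intro m' y
    induction y using TensorProduct.induction_on with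
    | zero => simp
    | tmul d₁ d₂ =>
      simp only [TensorProduct.map_tmul, TensorProduct.assoc_tmul,
        LinearMap.lTensor_tmul, LinearMap.rTensor_tmul, LinearMap.id_coe, id_eq]
      have : p (ι d₂) = 0 := (Submodule.Quotient.mk_eq_zero D).2 d₂.2
      rw [this]
      simp
    | add y₁ y₂ h₁ h₂ =>
      rw [map_add, TensorProduct.add_tmul, map_add, map_add, h₁, h₂, add_zero]
  have hvanish : ∀ x : D ⊗[k] M,
      LinearMap.lTensor C (LinearMap.rTensor M p)
        ((TensorProduct.assoc k C C M)
          (LinearMap.rTensor M ((Coalgebra.comul (R := k)).comp ι) x)) = 0 := by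
    intro x
    induction x using TensorProduct.induction_on with
    | zero => simp
    | tmul d m' =>
      obtain ⟨y, hy⟩ := hD (ι d) d.2
      have : LinearMap.rTensor M ((Coalgebra.comul (R := k)).comp ι) (d ⊗ₜ[k] m')
          = (TensorProduct.map ι ι y) ⊗ₜ[k] m' := by
        simp [LinearMap.rTensor_tmul, hy]
      rw [this]
      exact hinner m' y
    | add x₁ x₂ h₁ h₂ =>
      rw [map_add, map_add, map_add, h₁, h₂, add_zero]
  have hkey : LinearMap.lTensor C T (δ m) = 0 := by
    have h1 : LinearMap.lTensor C T (δ m)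
        = LinearMap.lTensor C (LinearMap.rTensor M p)
            ((TensorProduct.map LinearMap.id δ) (δ m)) := by
      rw [hT, LinearMap.lTensor_comp, LinearMap.comp_apply]
      rfl
    rw [h1, ← hcoassoc m, ← hx]
    have h2 : (TensorProduct.map (Coalgebra.comul (R := k)) LinearMap.id)
        (LinearMap.rTensor M ι x)
        = LinearMap.rTensor M ((Coalgebra.comul (R := k)).comp ι) x := by
      rw [LinearMap.rTensor_comp]
      rfl
    rw [h2]
    exact hvanish x
  -- transfer the vanishing to `x`
  have hsub : LinearMap.lTensor D T x = 0 := by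
    have hcomm : LinearMap.rTensor ((C ⧸ D) ⊗[k] M) ι (LinearMap.lTensor D T x)
        = LinearMap.lTensor C T (LinearMap.rTensor M ι x) := by
      rw [← LinearMap.comp_apply, ← LinearMap.comp_apply,
        LinearMap.rTensor_comp_lTensor, LinearMap.lTensor_comp_rTensor]
    have hinj : Function.Injective (LinearMap.rTensor ((C ⧸ D) ⊗[k] M) ι) :=
      Module.Flat.rTensor_preserves_injective_linearMap ι (Submodule.injective_subtype D)
    apply hinj
    rw [hcomm, hx, hkey, map_zero]
  -- x ∈ D ⊗ ker T
  have hexact2 : Function.Exact (LinearMap.lTensor D (LinearMap.ker T).subtype)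
      (LinearMap.lTensor D T.rangeRestrict) := by
    have gen : ∀ {P : Type _} [AddCommGroup P] [Module k P] (T : M →ₗ[k] P),
        Function.Exact (LinearMap.ker T).subtype T.rangeRestrict →
        Function.Exact (LinearMap.lTensor D (LinearMap.ker T).subtype)
          (LinearMap.lTensor D T.rangeRestrict) :=
      fun T hex => lTensor_exact D hex T.surjective_rangeRestrict
    refine gen T ?_
    rw [LinearMap.exact_iff, LinearMap.ker_rangeRestrict, Submodule.range_subtype]
  have hrr : LinearMap.lTensor D T.rangeRestrict x = 0 := by
    have hinj : Function.Injective
        (LinearMap.lTensor D (LinearMap.range T).subtype) :=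
      Module.Flat.lTensor_preserves_injective_linearMap _
        (Submodule.injective_subtype (LinearMap.range T))
    apply hinj
    have : LinearMap.lTensor D (LinearMap.range T).subtype
        (LinearMap.lTensor D T.rangeRestrict x) = LinearMap.lTensor D T x := by
      rw [← LinearMap.comp_apply, ← LinearMap.lTensor_comp]
      rfl
    rw [this, hsub, map_zero]
  obtain ⟨y, hy⟩ := (hexact2 x).mp hrr
  -- conclude
  rw [← hkerT]
  refine ⟨y, ?_⟩
  have : TensorProduct.map D.subtype (LinearMap.ker T).subtype y
      = LinearMap.rTensor M ι (LinearMap.lTensor D (LinearMap.ker T).subtype y) := by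
    rw [← LinearMap.comp_apply, LinearMap.rTensor_comp_lTensor]
  rw [this, hy, hx]
end

section
/- For every r ∈ R = A^{coπ}, the element (π ⊗ id_A)(Δ(r)) = Σ π(r_(1)) ⊗ r_(2) lies in H ⊗ R (i.e. its second tensor legs can be taken to be coinvariants); thus δ(r) := (π ⊗ id)(Δ(r)) defines a left H-comodule structure on R. -/
/-!
Write `f := (id ⊗ π) ∘ Δ - (· ⊗ 1) : A → A ⊗ H`, so that `R = ker f`. For `r ∈ R`, coassociativity
gives `(id ⊗ f)(Δ r) = (Δ ⊗ id)(r ⊗ 1) - Δ r ⊗ 1 = 0`, hence also `(id ⊗ f)((π ⊗ id)(Δ r)) = 0`.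
Since `H` is flat over the field `k`, `0 → H ⊗ R → H ⊗ A → H ⊗ A ⊗ H` is exact, so
`(π ⊗ id)(Δ r) ∈ H ⊗ R`.
-/

open TensorProduct

/-- The coinvariant subalgebra `R = A^{co π} = {a | Σ a₍₁₎ ⊗ π(a₍₂₎) = a ⊗ 1}` as a
`k`-submodule of `A` (it is the kernel of a linear map). -/
noncomputable def coinvSubmodule {k A H : Type*} [Field k] [Ring A] [HopfAlgebra k A]
    [Ring H] [HopfAlgebra k H] (π : A →ₐc[k] H) : Submodule k A :=
  LinearMap.ker
    ((TensorProduct.map LinearMap.id (π : A →ₗ[k] H)).comp (Coalgebra.comul (R := k)) -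
      (TensorProduct.mk k A H).flip (1 : H))

open LinearMap Coalgebra

lemma lTensor_mk_flip_apply {R M N P : Type*} [CommSemiring R] [AddCommMonoid M] [Module R M]
    [AddCommMonoid N] [Module R N] [AddCommMonoid P] [Module R P] (p : P) (x : M ⊗[R] N) :
    lTensor M ((mk R N P).flip p) x = TensorProduct.assoc R M N P (x ⊗ₜ p) := by
  induction x using TensorProduct.induction_on with
  | zero => simp
  | tmul m n => simp
  | add x y hx hy => simp [add_tmul, hx, hy]

section CoinvariantDefect

variable {R C V : Type*} [CommRing R] [AddCommGroup C] [Module R C] [Coalgebra R C]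
  [AddCommGroup V] [Module R V]

noncomputable def coinvariantDefect (π : C →ₗ[R] V) (v : V) : C →ₗ[R] C ⊗[R] V :=
  lTensor C π ∘ₗ comul - (mk R C V).flip v

lemma lTensor_coinvariantDefect_comul {π : C →ₗ[R] V} {v : V} {c : C}
    (hc : c ∈ ker (coinvariantDefect π v)) :
    lTensor C (coinvariantDefect π v) (comul c) = 0 := by
  have hc' : lTensor C π (comul c) = c ⊗ₜ[R] v := by
    simpa [coinvariantDefect, sub_eq_zero] using hc
  rw [coinvariantDefect, lTensor_sub, LinearMap.sub_apply, sub_eq_zero, lTensor_comp, comp_apply,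
    ← coassoc_apply, lTensor_mk_flip_apply]
  calc lTensor C (lTensor C π) (TensorProduct.assoc R C C C (rTensor C comul (comul c)))
      = TensorProduct.assoc R C C V (lTensor (C ⊗[R] C) π (rTensor C comul (comul c))) := by
        simp only [lTensor_tensor, comp_apply, LinearEquiv.coe_coe, LinearEquiv.apply_symm_apply]
    _ = TensorProduct.assoc R C C V (rTensor V comul (lTensor C π (comul c))) := by
        rw [← comp_apply (lTensor _ π), lTensor_comp_rTensor, ← rTensor_comp_lTensor, comp_apply]
    _ = TensorProduct.assoc R C C V (comul c ⊗ₜ v) := by rw [hc', rTensor_tmul]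

lemma rTensor_comul_mem_range_lTensor_ker_coinvariantDefect {W : Type*} [AddCommGroup W]
    [Module R W] [Module.Flat R W] (φ : C →ₗ[R] W) {π : C →ₗ[R] V} {v : V} {c : C}
    (hc : c ∈ ker (coinvariantDefect π v)) :
    rTensor C φ (comul c) ∈ range (lTensor W (ker (coinvariantDefect π v)).subtype) := by
  rw [← exact_iff.mp (Module.Flat.lTensor_exact W (exact_subtype_ker_map _)), mem_ker,
    ← comp_apply, lTensor_comp_rTensor, ← rTensor_comp_lTensor, comp_apply,
    lTensor_coinvariantDefect_comul hc, map_zero]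

end CoinvariantDefect

lemma coinvSubmodule_eq_ker_coinvariantDefect {k A H : Type*} [Field k] [Ring A]
    [HopfAlgebra k A] [Ring H] [HopfAlgebra k H] (π : A →ₐc[k] H) :
    coinvSubmodule π = ker (coinvariantDefect (π : A →ₗ[k] H) 1) :=
  rfl

theorem coinvariants_comodule_general
    {k A H : Type*} [Field k] [Ring A] [HopfAlgebra k A] [Ring H] [HopfAlgebra k H]
    (π : A →ₐc[k] H) :
    ∀ r ∈ coinvSubmodule π,
      (TensorProduct.map (π : A →ₗ[k] H) LinearMap.id) (Coalgebra.comul r) ∈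
        LinearMap.range
          (TensorProduct.map (LinearMap.id (M := H)) (coinvSubmodule π).subtype) := by
  rw [coinvSubmodule_eq_ker_coinvariantDefect]
  exact fun _ hr => rTensor_comul_mem_range_lTensor_ker_coinvariantDefect _ hr

/-- for `r ∈ R = A^{co π}`, the element `Σ π(r₍₁₎) ⊗ r₍₂₎` lies in `H ⊗ R`
inside `H ⊗ A`; thus `δ(r) = (π ⊗ id)Δ(r)` defines a left `H`-comodule structure on `R`. -/
theorem coinvariants_comodule
    {k A H : Type*} [Field k] [Ring A] [HopfAlgebra k A] [Ring H] [HopfAlgebra k H]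
    (hSA : Function.Bijective (HopfAlgebra.antipode (R := k) (A := A)))
    (hSH : Function.Bijective (HopfAlgebra.antipode (R := k) (A := H)))
    (π : A →ₐc[k] H) (ι : H →ₐc[k] A) (hπι : ∀ h : H, π (ι h) = h) :
    ∀ r ∈ coinvSubmodule π,
      (TensorProduct.map (π : A →ₗ[k] H) LinearMap.id) (Coalgebra.comul r) ∈
        LinearMap.range
          (TensorProduct.map (LinearMap.id (M := H)) (coinvSubmodule π).subtype) :=
  coinvariants_comodule_general π
end

section
/- The k-linear map Ψ : R ⊗ H → A, Ψ(r ⊗ h) = r·ι(h), is bijective, with inverse given by Φ : A → R ⊗ H, Φ(a) = Σ θ(a_(1)) ⊗ π(a_(2)) (which is well defined since θ takes values in R). In particular A ≅ A^{coπ} ⊗ H as k-vector spaces. -/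
open TensorProduct

/-- The map `θ : A → A`, `θ(a) = Σ a₍₁₎ · ι(S_H(π(a₍₂₎)))`. -/
noncomputable def thetaMap {k A H : Type*} [Field k] [Ring A] [HopfAlgebra k A]
    [Ring H] [HopfAlgebra k H] (π : A →ₐc[k] H) (ι : H →ₐc[k] A) : A →ₗ[k] A :=
  (LinearMap.mul' k A).comp
    ((TensorProduct.map LinearMap.id
        ((ι : H →ₗ[k] A).comp
          ((HopfAlgebra.antipode (R := k) (A := H)).comp (π : A →ₗ[k] H)))).comp
      (Coalgebra.comul (R := k)))

section RadfordAux

open Coalgebra HopfAlgebra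

variable {k A H : Type*} [Field k] [Ring A] [HopfAlgebra k A]
    [Ring H] [HopfAlgebra k H] (π : A →ₐc[k] H) (ι : H →ₐc[k] A)

lemma RadfordAux.mem_coinv_iff {a : A} : a ∈ coinvSubmodule π ↔
    (TensorProduct.map LinearMap.id (π : A →ₗ[k] H)) (Coalgebra.comul (R := k) a)
      = a ⊗ₜ[k] (1 : H) := by
  simp [coinvSubmodule, LinearMap.mem_ker, sub_eq_zero, TensorProduct.mk_apply]

lemma RadfordAux.coinv_repr {r : A} (hr : r ∈ coinvSubmodule π) {κ : Type*}
    (ρ : Coalgebra.Repr k r κ) :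
    ∑ i ∈ ρ.index, ρ.left i ⊗ₜ[k] π (ρ.right i) = r ⊗ₜ[k] (1 : H) := by
  have h := (RadfordAux.mem_coinv_iff π).1 hr
  rw [show Coalgebra.comul (R := k) r = CoalgebraStruct.comul (R := k) r from rfl, ← ρ.eq,
    map_sum] at h
  simpa using h

lemma RadfordAux.theta_repr (a : A) {κ : Type*} (ρ : Coalgebra.Repr k a κ) :
    thetaMap π ι a = ∑ i ∈ ρ.index,
      ρ.left i * ι (antipode (R := k) (π (ρ.right i))) := by
  rw [thetaMap]
  simp only [LinearMap.comp_apply]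
  rw [show Coalgebra.comul (R := k) a = CoalgebraStruct.comul (R := k) a from rfl, ← ρ.eq,
    map_sum, map_sum]
  simp

lemma RadfordAux.comul_mul_iota (r : A) (h : H) {κ₁ κ₂ : Type*} (ρ : Coalgebra.Repr k r κ₁)
    (η : Coalgebra.Repr k h κ₂) :
    Coalgebra.comul (R := k) (r * ι h) =
      ∑ i ∈ ρ.index, ∑ j ∈ η.index,
        (ρ.left i * ι (η.left j)) ⊗ₜ[k] (ρ.right i * ι (η.right j)) := by
  have hι : Coalgebra.comul (R := k) (ι h) =
      ∑ j ∈ η.index, ι (η.left j) ⊗ₜ[k] ι (η.right j) := by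
    rw [← CoalgHomClass.map_comp_comul_apply ι h,
      show Coalgebra.comul (R := k) h = CoalgebraStruct.comul (R := k) h from rfl, ← η.eq,
      map_sum]
    simp
  rw [Bialgebra.comul_mul, hι,
    show Coalgebra.comul (R := k) r = CoalgebraStruct.comul (R := k) r from rfl, ← ρ.eq,
    Finset.sum_mul_sum]
  simp [Algebra.TensorProduct.tmul_mul_tmul]

/-- `θ(r · ι(g)) = ε(g) • r` for coinvariant `r`. -/
lemma RadfordAux.theta_mul_iota (hπι : ∀ h : H, π (ι h) = h)
    {r : A} (hr : r ∈ coinvSubmodule π) (g : H) :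
    thetaMap π ι (r * ι g) = Coalgebra.counit (R := k) g • r := by
  classical
  set ρ := ℛ k r
  set γ := ℛ k g
  have hcm := RadfordAux.comul_mul_iota ι r g ρ γ
  set SH := HopfAlgebra.antipode (R := k) (A := H) with hSH
  set L : A ⊗[k] H →ₗ[k] A :=
    ∑ j ∈ γ.index,
      (LinearMap.mul' k A).comp
        (TensorProduct.map LinearMap.id
          ((LinearMap.mulLeft k (ι (γ.left j))).comp
            ((ι : H →ₗ[k] A).comp (SH.comp (LinearMap.mulRight k (γ.right j)))))) with hL
  have key := congrArg L (RadfordAux.coinv_repr π hr ρ)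
  rw [map_sum] at key
  simp only [hL, LinearMap.sum_apply, LinearMap.comp_apply, TensorProduct.map_tmul,
    LinearMap.mul'_apply, LinearMap.mulLeft_apply, LinearMap.mulRight_apply,
    LinearMap.id_coe, id_eq, LinearMap.coe_coe] at key
  have hcι : ∀ x, ((ι : H →ₗ[k] A) : H → A) x = ι x := fun _ => rfl
  have hcπ : ∀ x, ((π : A →ₗ[k] H) : A → H) x = π x := fun _ => rfl
  have hRHS : ∑ j ∈ γ.index, r * (ι (γ.left j) * ι (SH ((1:H) * γ.right j)))
      = Coalgebra.counit (R := k) g • r := by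
    simp only [one_mul, ← map_mul, ← Finset.mul_sum, ← map_sum]
    rw [HopfAlgebra.sum_mul_antipode_eq_algebraMap_counit γ]
    rw [AlgHomClass.commutes, ← Algebra.commutes, ← Algebra.smul_def]
  rw [hRHS] at key
  rw [thetaMap]
  simp only [LinearMap.comp_apply]
  rw [hcm, map_sum, map_sum]
  simp only [map_sum, TensorProduct.map_tmul, LinearMap.mul'_apply, LinearMap.comp_apply,
    LinearMap.id_coe, id_eq, LinearMap.coe_coe]
  refine Eq.trans ?_ key
  refine Finset.sum_congr rfl fun i _ => Finset.sum_congr rfl fun j _ => ?_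
  rw [map_mul, hπι, mul_assoc]

/-- `(θ ⊗ π)(Δ(r·ι(h))) = r ⊗ h` for coinvariant `r`. -/
lemma RadfordAux.phi_psi_tmul (hπι : ∀ h : H, π (ι h) = h)
    {r : A} (hr : r ∈ coinvSubmodule π) (h : H) :
    (TensorProduct.map (thetaMap π ι) (π : A →ₗ[k] H))
      (Coalgebra.comul (R := k) (r * ι h)) = r ⊗ₜ[k] h := by
  classical
  set ρ := ℛ k r
  set η := ℛ k h
  have hcπ : ∀ x, ((π : A →ₗ[k] H) : A → H) x = π x := fun _ => rfl
  set F : A ⊗[k] H →ₗ[k] A ⊗[k] H :=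
    ∑ j ∈ η.index,
      TensorProduct.map ((thetaMap π ι).comp (LinearMap.mulRight k (ι (η.left j))))
        (LinearMap.mulRight k (η.right j)) with hF
  have key := congrArg F (RadfordAux.coinv_repr π hr ρ)
  rw [map_sum] at key
  simp only [hF, LinearMap.sum_apply, TensorProduct.map_tmul, LinearMap.comp_apply,
    LinearMap.mulRight_apply] at key
  have hRHS : ∑ j ∈ η.index,
      thetaMap π ι (r * ι (η.left j)) ⊗ₜ[k] ((1:H) * η.right j) = r ⊗ₜ[k] h := by
    have hsum : ∑ j ∈ η.index, Coalgebra.counit (R := k) (η.left j) • η.right j = h := by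
      have h3 := congrArg (TensorProduct.lid k H) (Coalgebra.sum_counit_tmul_eq η)
      rw [map_sum] at h3
      simp only [TensorProduct.lid_tmul, one_smul] at h3
      simpa using h3
    calc ∑ j ∈ η.index, thetaMap π ι (r * ι (η.left j)) ⊗ₜ[k] ((1:H) * η.right j)
        = ∑ j ∈ η.index, r ⊗ₜ[k] (Coalgebra.counit (R := k) (η.left j) • η.right j) := by
          refine Finset.sum_congr rfl fun j _ => ?_
          rw [RadfordAux.theta_mul_iota π ι hπι hr (η.left j), one_mul,
            TensorProduct.smul_tmul]
      _ = r ⊗ₜ[k] h := by rw [← TensorProduct.tmul_sum, hsum]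
  rw [hRHS] at key
  rw [RadfordAux.comul_mul_iota ι r h ρ η, map_sum]
  simp only [map_sum, TensorProduct.map_tmul, hcπ]
  refine Eq.trans ?_ key
  refine Finset.sum_congr rfl fun i _ => Finset.sum_congr rfl fun j _ => ?_
  rw [show π (ρ.right i * ι (η.right j)) = π (ρ.right i) * η.right j by
    rw [map_mul, hπι]]

/-- `Ψ ∘ Φ = id` in explicit form. -/
lemma RadfordAux.psi_phi_aux (a : A) :
    LinearMap.mul' k A
      ((TensorProduct.map (thetaMap π ι) ((ι : H →ₗ[k] A).comp (π : A →ₗ[k] H)))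
        (Coalgebra.comul (R := k) a)) = a := by
  classical
  set SH := HopfAlgebra.antipode (R := k) (A := H) with hSHdef
  set ρ := ℛ k a with hρ
  set σ : (i : A × A) → Coalgebra.Repr k (ρ.left i) (A × A) := fun i => ℛ k (ρ.left i) with hσ
  set τ : (i : A × A) → Coalgebra.Repr k (ρ.right i) (A × A) := fun i => ℛ k (ρ.right i) with hτ
  have hcι : ∀ x, ((ι : H →ₗ[k] A) : H → A) x = ι x := fun _ => rfl
  have hcπ : ∀ x, ((π : A →ₗ[k] H) : A → H) x = π x := fun _ => rfl
  set M : A ⊗[k] (A ⊗[k] A) →ₗ[k] A :=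
    (LinearMap.mul' k A).comp
      (TensorProduct.map LinearMap.id
        ((ι : H →ₗ[k] A).comp ((LinearMap.mul' k H).comp
          (TensorProduct.map (SH.comp (π : A →ₗ[k] H)) (π : A →ₗ[k] H))))) with hM
  have key := congrArg M (Coalgebra.sum_tmul_tmul_eq ρ σ τ)
  rw [map_sum, map_sum] at key
  simp only [hM, map_sum, LinearMap.comp_apply, TensorProduct.map_tmul,
    LinearMap.mul'_apply, LinearMap.id_coe, id_eq, hcι, hcπ] at key
  have hsub : ∀ i, ∑ j ∈ (τ i).index, SH (π ((τ i).left j)) * π ((τ i).right j)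
      = algebraMap k H (Coalgebra.counit (R := k) (ρ.right i)) := by
    intro i
    have h2 := HopfAlgebra.sum_antipode_mul_eq_algebraMap_counit (R := k) ((τ i).induced π)
    rw [CoalgHomClass.counit_comp_apply] at h2
    simpa [Coalgebra.Repr.induced] using h2
  have hRHS : ∑ i ∈ ρ.index, ∑ j ∈ (τ i).index,
      ρ.left i * ι (SH (π ((τ i).left j)) * π ((τ i).right j)) = a := by
    have last : ∑ i ∈ ρ.index, Coalgebra.counit (R := k) (ρ.right i) • ρ.left i = a := by
      have h3 := congrArg (TensorProduct.rid k A) (Coalgebra.sum_tmul_counit_eq ρ)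
      rw [map_sum] at h3
      simp only [TensorProduct.rid_tmul, one_smul] at h3
      exact h3
    calc ∑ i ∈ ρ.index, ∑ j ∈ (τ i).index,
          ρ.left i * ι (SH (π ((τ i).left j)) * π ((τ i).right j))
        = ∑ i ∈ ρ.index, ρ.left i * ι (∑ j ∈ (τ i).index,
            SH (π ((τ i).left j)) * π ((τ i).right j)) := by
          simp [Finset.mul_sum, map_sum]
      _ = ∑ i ∈ ρ.index, Coalgebra.counit (R := k) (ρ.right i) • ρ.left i := by
          refine Finset.sum_congr rfl fun i _ => ?_
          rw [hsub i, AlgHomClass.commutes, ← Algebra.commutes, ← Algebra.smul_def]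
      _ = a := last
  rw [hRHS] at key
  rw [show Coalgebra.comul (R := k) a = CoalgebraStruct.comul (R := k) a from rfl, ← ρ.eq,
    map_sum, map_sum]
  simp only [TensorProduct.map_tmul, LinearMap.mul'_apply, LinearMap.comp_apply, hcι, hcπ]
  refine Eq.trans ?_ key
  refine Finset.sum_congr rfl fun i _ => ?_
  rw [RadfordAux.theta_repr π ι (ρ.left i) (σ i), Finset.sum_mul]
  refine Finset.sum_congr rfl fun j _ => ?_
  rw [mul_assoc, ← map_mul]

end RadfordAux

/-- the map `Ψ : R ⊗ H → A`, `r ⊗ h ↦ r·ι(h)`, is bijective with inverse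
`Φ : A → R ⊗ H`, `Φ(a) = Σ θ(a₍₁₎) ⊗ π(a₍₂₎)`; in particular `A ≅ A^{co π} ⊗ H` as
`k`-vector spaces. -/
theorem radford_decomposition
    {k A H : Type*} [Field k] [Ring A] [HopfAlgebra k A] [Ring H] [HopfAlgebra k H]
    (hSA : Function.Bijective (HopfAlgebra.antipode (R := k) (A := A)))
    (hSH : Function.Bijective (HopfAlgebra.antipode (R := k) (A := H)))
    (π : A →ₐc[k] H) (ι : H →ₐc[k] A) (hπι : ∀ h : H, π (ι h) = h)
    (hθ : ∀ a : A, thetaMap π ι a ∈ coinvSubmodule π) :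
    let Ψ : (coinvSubmodule π ⊗[k] H) →ₗ[k] A :=
      (LinearMap.mul' k A).comp
        (TensorProduct.map (coinvSubmodule π).subtype (ι : H →ₗ[k] A))
    let Φ : A →ₗ[k] (coinvSubmodule π ⊗[k] H) :=
      (TensorProduct.map
          (LinearMap.codRestrict (coinvSubmodule π) (thetaMap π ι) hθ)
          (π : A →ₗ[k] H)).comp
        (Coalgebra.comul (R := k))
    Function.Bijective Ψ ∧ (∀ a : A, Ψ (Φ a) = a) ∧
      (∀ x : coinvSubmodule π ⊗[k] H, Φ (Ψ x) = x) := by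
  intro Ψ Φ
  have hcomp1 : (TensorProduct.map (coinvSubmodule π).subtype (ι : H →ₗ[k] A)).comp
      (TensorProduct.map
        (LinearMap.codRestrict (coinvSubmodule π) (thetaMap π ι) hθ) (π : A →ₗ[k] H))
      = TensorProduct.map (thetaMap π ι) ((ι : H →ₗ[k] A).comp (π : A →ₗ[k] H)) := by
    rw [← TensorProduct.map_comp, LinearMap.subtype_comp_codRestrict]
  have hΨΦ : ∀ a : A, Ψ (Φ a) = a := by
    intro a
    show LinearMap.mul' k A ((TensorProduct.map (coinvSubmodule π).subtype (ι : H →ₗ[k] A))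
      ((TensorProduct.map (LinearMap.codRestrict (coinvSubmodule π) (thetaMap π ι) hθ)
        (π : A →ₗ[k] H)) (Coalgebra.comul (R := k) a))) = a
    rw [← LinearMap.comp_apply (TensorProduct.map _ _), hcomp1]
    exact RadfordAux.psi_phi_aux π ι a
  have hΦΨ : ∀ x : coinvSubmodule π ⊗[k] H, Φ (Ψ x) = x := by
    have hinj : Function.Injective
        (LinearMap.rTensor H (coinvSubmodule π).subtype) :=
      Module.Flat.rTensor_preserves_injective_linearMap _ (coinvSubmodule π).injective_subtype
    intro x
    apply hinj
    have hcomp2 : (LinearMap.rTensor H (coinvSubmodule π).subtype).comp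
        (TensorProduct.map
          (LinearMap.codRestrict (coinvSubmodule π) (thetaMap π ι) hθ) (π : A →ₗ[k] H))
        = TensorProduct.map (thetaMap π ι) (π : A →ₗ[k] H) := by
      rw [LinearMap.rTensor, ← TensorProduct.map_comp, LinearMap.subtype_comp_codRestrict,
        LinearMap.id_comp]
    induction x using TensorProduct.induction_on with
    | zero => simp
    | tmul r h =>
      have h1 : Ψ (r ⊗ₜ[k] h) = (r : A) * ι h := by
        show LinearMap.mul' k A ((TensorProduct.map (coinvSubmodule π).subtype
          (ι : H →ₗ[k] A)) (r ⊗ₜ[k] h)) = (r : A) * ι h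
        simp [TensorProduct.map_tmul]
      rw [h1]
      show (LinearMap.rTensor H (coinvSubmodule π).subtype)
        ((TensorProduct.map (LinearMap.codRestrict (coinvSubmodule π) (thetaMap π ι) hθ)
          (π : A →ₗ[k] H)) (Coalgebra.comul (R := k) ((r : A) * ι h)))
        = (LinearMap.rTensor H (coinvSubmodule π).subtype) (r ⊗ₜ[k] h)
      rw [← LinearMap.comp_apply (LinearMap.rTensor H _), hcomp2,
        RadfordAux.phi_psi_tmul π ι hπι r.2 h]
      simp [LinearMap.rTensor_tmul]
    | add y z hy hz =>
      simp only [map_add, hy, hz]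
  refine ⟨⟨fun x y hxy => by rw [← hΦΨ x, hxy, hΦΨ y], fun a => ⟨Φ a, hΨΦ a⟩⟩, hΨΦ, hΦΨ⟩
end

section
/- Suppose: (1) 2·B(α_a, α_{a'}) = B(α_a, α_a)·b(a,a') for all a, a' ∈ Π; (2) 2·B(α_a, λ_i) = −B(α_a, α_a)·b(a,i) for all a ∈ Π, i ∈ I; (3) 2·B(α_a, λ_i) = −φ(i,i)·b(i,a) for all a ∈ Π, i ∈ I; (4) φ(i,j) + φ(j,i) = φ(i,i)·b(i,j) for all i, j ∈ I; (5) for every i ∈ I with φ(i,i) = 0 one has b(i,i) = 2 and b(i,p) = 0 for all p ∈ P with p ≠ i; and the strong exponential condition: for every i ∈ I, if φ(i,i) ≤ 0 then λ_i = 0 and φ(i,j) + φ(j,i) = 0 for all j ∈ I. Then the matrix b is symmetrizable by positive symmetrizers: there exist rational numbers d_p > 0 (p ∈ P) such that d_p·b(p,q) = d_q·b(q,p) for all p, q ∈ P. -/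
/-!
Put `w a = B(α_a, α_a)`, `w i = φ(i,i)`, and let `c` be the symmetric matrix with entries
`2B(α_a, α_a')`, `-2B(α_a, λ_i)` and `φ(i,j) + φ(j,i)`. Conditions (1)–(4) say exactly that
`w p · b(p,q) = c(p,q)`, so `w` symmetrizes `b` on the indices where it is positive. An index `i`
with `φ(i,i) ≤ 0` is isolated: the strong exponential condition kills row `i` of `c` off the
diagonal, hence also row `i` of `b` (by (5) when `φ(i,i) = 0`), and weight `1` works there.
-/

section Symmetrizer

variable {P K : Type*} [Field K] [LinearOrder K] [IsStrictOrderedRing K]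

theorem exists_pos_symmetrizer_of_mul_eq_symm (b c : P → P → K) (w : P → K)
    (hc : ∀ p q, c p q = c q p) (hwb : ∀ p q, w p * b p q = c p q)
    (hc_zero : ∀ p, w p ≤ 0 → ∀ q ≠ p, c p q = 0)
    (hb_zero : ∀ p, w p = 0 → ∀ q ≠ p, b p q = 0) :
    ∃ d : P → K, (∀ p, 0 < d p) ∧ ∀ p q, d p * b p q = d q * b q p := by
  set d : P → K := fun p => if 0 < w p then w p else 1
  have hb_row : ∀ p, w p ≤ 0 → ∀ q ≠ p, b p q = 0 := by
    intro p hp q hq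
    rcases lt_or_eq_of_le hp with hneg | h0
    · have := hwb p q
      rw [hc_zero p hp q hq] at this
      exact (mul_eq_zero.mp this).resolve_left hneg.ne
    · exact hb_zero p h0 q hq
  have off_diag : ∀ p q, q ≠ p →
      d p * b p q = if 0 < w p ∧ 0 < w q then c p q else 0 := by
    intro p q hqp
    by_cases hp : 0 < w p
    · simp only [d, if_pos hp, hwb, hp, true_and]
      split_ifs with hq
      · rfl
      · rw [hc, hc_zero q (not_lt.mp hq) p hqp.symm]
    · simp [d, hp, hb_row p (not_lt.mp hp) q hqp]
  refine ⟨d, fun p => ?_, fun p q => ?_⟩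
  · by_cases hp : 0 < w p <;> simp [d, hp]
  · rcases eq_or_ne q p with rfl | hqp
    · rfl
    rw [off_diag p q hqp, off_diag q p hqp.symm, hc]
    simp only [and_comm]

end Symmetrizer

section ExtendedCartan

variable {Γ I V : Type*} [AddCommGroup V] [Module ℚ V]

def extendedGram (B : V →ₗ[ℚ] V →ₗ[ℚ] ℚ) (α : Γ → V) (lam : I → V) (φ : I → I → ℚ) :
    Γ ⊕ I → Γ ⊕ I → ℚ
  | .inl a, .inl a' => 2 * B (α a) (α a')
  | .inl a, .inr i => -(2 * B (α a) (lam i))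
  | .inr i, .inl a => -(2 * B (α a) (lam i))
  | .inr i, .inr j => φ i j + φ j i

theorem extendedGram_symm (B : V →ₗ[ℚ] V →ₗ[ℚ] ℚ) (hBsymm : ∀ v w : V, B v w = B w v)
    (α : Γ → V) (lam : I → V) (φ : I → I → ℚ) (p q : Γ ⊕ I) :
    extendedGram B α lam φ p q = extendedGram B α lam φ q p := by
  rcases p with a | i <;> rcases q with a' | j
  · simp only [extendedGram, hBsymm (α a)]
  · rfl
  · rfl
  · exact add_comm _ _

end ExtendedCartan

theorem extended_cartan_matrix_symmetrizable_general
    {Γ I V : Type*}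
    [AddCommGroup V] [Module ℚ V]
    (B : V →ₗ[ℚ] V →ₗ[ℚ] ℚ) (hBsymm : ∀ v w : V, B v w = B w v)
    (α : Γ → V) (hα : ∀ a : Γ, 0 < B (α a) (α a))
    (lam : I → V)
    (φ : I → I → ℚ)
    (b : Γ ⊕ I → Γ ⊕ I → ℚ)
    (h1 : ∀ a a' : Γ, 2 * B (α a) (α a') = B (α a) (α a) * b (Sum.inl a) (Sum.inl a'))
    (h2 : ∀ (a : Γ) (i : I), 2 * B (α a) (lam i) = -(B (α a) (α a) * b (Sum.inl a) (Sum.inr i)))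
    (h3 : ∀ (a : Γ) (i : I), 2 * B (α a) (lam i) = -(φ i i * b (Sum.inr i) (Sum.inl a)))
    (h4 : ∀ i j : I, φ i j + φ j i = φ i i * b (Sum.inr i) (Sum.inr j))
    (h5 : ∀ i : I, φ i i = 0 → b (Sum.inr i) (Sum.inr i) = 2 ∧
      ∀ p : Γ ⊕ I, p ≠ Sum.inr i → b (Sum.inr i) p = 0)
    (hstrong : ∀ i : I, φ i i ≤ 0 → lam i = 0 ∧ ∀ j : I, φ i j + φ j i = 0) :
    ∃ d : Γ ⊕ I → ℚ, (∀ p, 0 < d p) ∧ ∀ p q, d p * b p q = d q * b q p := by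
  refine exists_pos_symmetrizer_of_mul_eq_symm b (extendedGram B α lam φ)
    (Sum.elim (fun a => B (α a) (α a)) (fun i => φ i i)) (extendedGram_symm B hBsymm α lam φ)
    ?_ ?_ ?_
  · rintro (a | i) (a' | j)
    · exact (h1 a a').symm
    · simp [extendedGram, h2]
    · simp [extendedGram, h3]
    · exact (h4 i j).symm
  · rintro (a | i) hw (a' | j) -
    · exact absurd (hα a) hw.not_gt
    · exact absurd (hα a) hw.not_gt
    · simp [extendedGram, (hstrong i hw).1]
    · exact (hstrong i hw).2 j
  · rintro (a | i) hw
    · exact absurd (hα a) hw.not_gt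
    · exact (h5 i hw).2

/-- Under conditions (1)-(5) and the strong exponential condition,
the extended Cartan matrix `b` is symmetrizable by positive symmetrizers. -/
theorem extended_cartan_matrix_symmetrizable
    {Γ I V : Type*} [Fintype Γ] [Fintype I]
    [AddCommGroup V] [Module ℚ V]
    (B : V →ₗ[ℚ] V →ₗ[ℚ] ℚ) (hBsymm : ∀ v w : V, B v w = B w v)
    (α : Γ → V) (hα : ∀ a : Γ, 0 < B (α a) (α a))
    (lam : I → V)
    (φ : I → I → ℚ) (hφsymm : ∀ i j : I, φ i j = φ j i)
    (b : Γ ⊕ I → Γ ⊕ I → ℚ)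
    (h1 : ∀ a a' : Γ, 2 * B (α a) (α a') = B (α a) (α a) * b (Sum.inl a) (Sum.inl a'))
    (h2 : ∀ (a : Γ) (i : I), 2 * B (α a) (lam i) = -(B (α a) (α a) * b (Sum.inl a) (Sum.inr i)))
    (h3 : ∀ (a : Γ) (i : I), 2 * B (α a) (lam i) = -(φ i i * b (Sum.inr i) (Sum.inl a)))
    (h4 : ∀ i j : I, φ i j + φ j i = φ i i * b (Sum.inr i) (Sum.inr j))
    (h5 : ∀ i : I, φ i i = 0 → b (Sum.inr i) (Sum.inr i) = 2 ∧
      ∀ p : Γ ⊕ I, p ≠ Sum.inr i → b (Sum.inr i) p = 0)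
    (hstrong : ∀ i : I, φ i i ≤ 0 → lam i = 0 ∧ ∀ j : I, φ i j + φ j i = 0) :
    ∃ d : Γ ⊕ I → ℚ, (∀ p, 0 < d p) ∧ ∀ p q, d p * b p q = d q * b q p :=
  extended_cartan_matrix_symmetrizable_general B hBsymm α hα lam φ b h1 h2 h3 h4 h5 hstrong
end
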